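/- Let g : (0,∞) → ℝ be integrable. Then ∫₀^∞ | ∫₀^{x/2} t² g(t)/(x (x² − t²)) dt | dx ≤ (1/6) ∫₀^∞ |g(t)| dt. -/

import Mathlib

/-!
By Tonelli, the left side is at most `∫₀^∞ |g t| (∫_{2t}^∞ t² / (x (x² − t²)) dx) dt`.
For `x ≥ 2t` we have `x² − t² ≥ 3x²/4`, so the inner integral is at most
`(4/3) t² ∫_{2t}^∞ x⁻³ dx = 1/6`.
-/

open MeasureTheory Real Set
open scoped ENNReal

section KernelBound

variable {α β E : Type*} [MeasurableSpace α] [MeasurableSpace β]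
  [NormedAddCommGroup E] [NormedSpace ℝ E]
  {μ : Measure α} {ν : Measure β} [SFinite μ] [SFinite ν]

theorem lintegral_enorm_integral_smul_le {K : α → β → ℝ} {g : β → E} {C : ℝ≥0∞}
    (hK : AEMeasurable (Function.uncurry K) (μ.prod ν)) (hg : AEStronglyMeasurable g ν)
    (hC : ∀ᵐ t ∂ν, ∫⁻ x, ‖K x t‖ₑ ∂μ ≤ C) :
    ∫⁻ x, ‖∫ t, K x t • g t ∂ν‖ₑ ∂μ ≤ C * ∫⁻ t, ‖g t‖ₑ ∂ν := by
  have hKg : AEMeasurable (Function.uncurry fun x t => ‖K x t‖ₑ * ‖g t‖ₑ) (μ.prod ν) :=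
    hK.enorm.mul hg.enorm.comp_snd
  calc ∫⁻ x, ‖∫ t, K x t • g t ∂ν‖ₑ ∂μ
      ≤ ∫⁻ x, ∫⁻ t, ‖K x t‖ₑ * ‖g t‖ₑ ∂ν ∂μ := by
        gcongr with x
        simpa only [enorm_smul] using enorm_integral_le_lintegral_enorm (fun t => K x t • g t)
    _ = ∫⁻ t, (∫⁻ x, ‖K x t‖ₑ ∂μ) * ‖g t‖ₑ ∂ν := by
        rw [lintegral_lintegral_swap hKg]
        exact lintegral_congr fun t => lintegral_mul_const' _ _ enorm_ne_top
    _ ≤ ∫⁻ t, C * ‖g t‖ₑ ∂ν := lintegral_mono_ae <| hC.mono fun t ht => by gcongr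
    _ = C * ∫⁻ t, ‖g t‖ₑ ∂ν := lintegral_const_mul'' C hg.enorm

theorem integral_norm_integral_smul_le {K : α → β → ℝ} {g : β → E} {C : ℝ} (hC₀ : 0 ≤ C)
    (hK : AEMeasurable (Function.uncurry K) (μ.prod ν)) (hg : Integrable g ν)
    (hC : ∀ᵐ t ∂ν, ∫⁻ x, ‖K x t‖ₑ ∂μ ≤ ENNReal.ofReal C) :
    ∫ x, ‖∫ t, K x t • g t ∂ν‖ ∂μ ≤ C * ∫ t, ‖g t‖ ∂ν := by
  have hfin : ENNReal.ofReal C * ∫⁻ t, ‖g t‖ₑ ∂ν ≠ ∞ :=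
    ENNReal.mul_ne_top ENNReal.ofReal_ne_top hg.hasFiniteIntegral.ne
  calc ∫ x, ‖∫ t, K x t • g t ∂ν‖ ∂μ
      ≤ (∫⁻ x, ENNReal.ofReal ‖‖∫ t, K x t • g t ∂ν‖‖ ∂μ).toReal :=
        (le_norm_self _).trans (norm_integral_le_lintegral_norm _)
    _ ≤ (ENNReal.ofReal C * ∫⁻ t, ‖g t‖ₑ ∂ν).toReal := by
        simp only [norm_norm, ofReal_norm]
        exact ENNReal.toReal_mono hfin
          (lintegral_enorm_integral_smul_le hK hg.aestronglyMeasurable hC)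
    _ = C * ∫ t, ‖g t‖ ∂ν := by
        rw [← ofReal_integral_norm_eq_lintegral_enorm hg, ENNReal.toReal_mul,
          ENNReal.toReal_ofReal (integral_nonneg fun _ => norm_nonneg _), ENNReal.toReal_ofReal hC₀]

end KernelBound

noncomputable def nearZeroKernel (x t : ℝ) : ℝ :=
  if t ≤ x / 2 then t ^ 2 / (x * (x ^ 2 - t ^ 2)) else 0

theorem measurable_uncurry_nearZeroKernel : Measurable (Function.uncurry nearZeroKernel) :=
  Measurable.ite (measurableSet_le measurable_snd (measurable_fst.div_const 2)) (by fun_prop)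
    measurable_const

theorem setIntegral_Ioc_eq_setIntegral_nearZeroKernel_smul (g : ℝ → ℝ) (x : ℝ) :
    ∫ t in Ioc 0 (x / 2), t ^ 2 * g t / (x * (x ^ 2 - t ^ 2))
      = ∫ t in Ioi 0, nearZeroKernel x t • g t := by
  rw [← Ioi_inter_Iic, ← setIntegral_indicator measurableSet_Iic]
  congr 1 with t
  simp only [nearZeroKernel, indicator_apply, mem_Iic, smul_eq_mul]
  split_ifs <;> ring

theorem abs_nearZeroKernel_le {t : ℝ} (ht : 0 < t) (x : ℝ) :
    |nearZeroKernel x t| ≤ (Ici (2 * t)).indicator (fun x => 4 / 3 * t ^ 2 * x ^ (-3 : ℝ)) x := by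
  unfold nearZeroKernel
  split_ifs with htx
  · have hx : 0 < x := by linarith
    have hdiff : 3 / 4 * x ^ 2 ≤ x ^ 2 - t ^ 2 := by nlinarith
    rw [indicator_of_mem (by rw [mem_Ici]; linarith),
      abs_of_nonneg (div_nonneg (sq_nonneg t) (mul_nonneg hx.le (by nlinarith))),
      show (-3 : ℝ) = ((-3 : ℤ) : ℝ) by norm_num, rpow_intCast]
    calc t ^ 2 / (x * (x ^ 2 - t ^ 2)) ≤ t ^ 2 / (x * (3 / 4 * x ^ 2)) := by gcongr
      _ = 4 / 3 * t ^ 2 * x ^ (-3 : ℤ) := by field_simp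
  · rw [abs_zero]
    refine indicator_nonneg (fun y hy => ?_) x
    exact mul_nonneg (by positivity) (rpow_nonneg (by linarith [mem_Ici.1 hy]) _)

theorem lintegral_enorm_nearZeroKernel_le {t : ℝ} (ht : 0 < t) :
    ∫⁻ x, ‖nearZeroKernel x t‖ₑ ≤ ENNReal.ofReal (1 / 6) := by
  have h2t : 0 < 2 * t := by linarith
  have hint : IntegrableOn (fun x : ℝ => 4 / 3 * t ^ 2 * x ^ (-3 : ℝ)) (Ici (2 * t)) :=
    (integrableOn_Ici_iff_integrableOn_Ioi (by finiteness)).2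
      ((integrableOn_Ioi_rpow_of_lt (by norm_num) h2t).const_mul _)
  calc ∫⁻ x, ‖nearZeroKernel x t‖ₑ
      ≤ ∫⁻ x, ENNReal.ofReal ((Ici (2 * t)).indicator (fun x => 4 / 3 * t ^ 2 * x ^ (-3 : ℝ)) x) :=
        lintegral_mono fun x => by
          rw [← ofReal_norm, Real.norm_eq_abs]
          exact ENNReal.ofReal_le_ofReal (abs_nearZeroKernel_le ht x)
    _ = ENNReal.ofReal (∫ x in Ioi (2 * t), 4 / 3 * t ^ 2 * x ^ (-3 : ℝ)) := by
        rw [← ofReal_integral_eq_lintegral_ofReal ((integrable_indicator_iff measurableSet_Ici).2 hint)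
          (Filter.Eventually.of_forall fun x => (abs_nonneg _).trans (abs_nearZeroKernel_le ht x)),
          integral_indicator measurableSet_Ici, integral_Ici_eq_integral_Ioi]
    _ = ENNReal.ofReal (1 / 6) := by
        rw [integral_const_mul, integral_Ioi_rpow_of_lt (by norm_num) h2t]
        congr 1
        rw [show (-3 : ℝ) + 1 = -(2 : ℕ) by norm_num, rpow_neg h2t.le, rpow_natCast]
        field_simp
        ring

/-- For integrable `g` on `(0,∞)`,
`∫₀^∞ |∫₀^{x/2} t² g(t)/(x(x² − t²)) dt| dx ≤ (1/6) ∫₀^∞ |g(t)| dt`. -/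
theorem near_zero_part_even_hilbert_bound
    (g : ℝ → ℝ) (hg : IntegrableOn g (Ioi (0 : ℝ))) :
    ∫ x in Ioi (0 : ℝ), |∫ t in Ioc (0 : ℝ) (x / 2), t ^ 2 * g t / (x * (x ^ 2 - t ^ 2))|
      ≤ 1 / 6 * ∫ t in Ioi (0 : ℝ), |g t| := by
  have hC : ∀ᵐ t ∂volume.restrict (Ioi 0),
      ∫⁻ x in Ioi 0, ‖nearZeroKernel x t‖ₑ ≤ ENNReal.ofReal (1 / 6) :=
    (ae_restrict_mem measurableSet_Ioi).mono fun t ht =>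
      (setLIntegral_le_lintegral _ _).trans (lintegral_enorm_nearZeroKernel_le ht)
  simpa only [setIntegral_Ioc_eq_setIntegral_nearZeroKernel_smul, Real.norm_eq_abs] using
    integral_norm_integral_smul_le (by norm_num)
      measurable_uncurry_nearZeroKernel.aemeasurable hg hC
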